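/- Let k be a field, 𝔬 = k[[T]], f ≥ 1, and λ : 𝔬/T^{f+1} → k a linear functional with λ(T^f) ≠ 0 (conductor exactly f). Set f' = ⌊(f+1)/2⌋ and f'' = ⌈(f+1)/2⌉. Then the stabilizer, under the multiplication action of U/U^{f+1} on linear functionals on T^{f''}𝔬/T^{f+1}𝔬, of the restriction λ|_{T^{f''}𝔬/T^{f+1}𝔬}, equals U^{f'}/U^{f+1}. -/

import Mathlib

/-- The truncated power series ring `𝔬/T^{f+1}𝔬` with `𝔬 = k[[T]]`. -/
abbrev TruncatedPS (k : Type*) [Field k] (f : ℕ) : Type _ :=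
  PowerSeries k ⧸ Ideal.span {(PowerSeries.X : PowerSeries k) ^ (f + 1)}

/-- The image `T` of the uniformizer in `𝔬/T^{f+1}𝔬`. -/
noncomputable abbrev truncT (k : Type*) [Field k] (f : ℕ) : TruncatedPS k f :=
  Ideal.Quotient.mk _ PowerSeries.X

/-!
If `u = 1 + a`, then `u` fixes `λ` on `T^{f''}𝔬` iff `λ(a v) = 0` for all `v ∈ T^{f''}𝔬`.
Since `f' + f'' = f + 1`, this holds when `a ∈ T^{f'}𝔬`. Otherwise `a = T^j w` with `j < f'`
and `w(0) ≠ 0`, and `v = T^{f-j}` lies in `T^{f''}𝔬` but `λ(a v) = w(0) λ(T^f) ≠ 0`.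
-/

namespace TruncatedPS

open PowerSeries Ideal

variable {k : Type*} [Field k] {f : ℕ}

theorem truncT_pow_eq_zero {n : ℕ} (hn : f + 1 ≤ n) : truncT k f ^ n = 0 := by
  rw [← map_pow, Ideal.Quotient.eq_zero_iff_mem, mem_span_singleton]
  exact pow_dvd_pow _ hn

theorem mul_eq_zero_of_mem_span_truncT_pow {i j : ℕ} (hij : f + 1 ≤ i + j)
    {a b : TruncatedPS k f} (ha : a ∈ span {truncT k f ^ i})
    (hb : b ∈ span {truncT k f ^ j}) : a * b = 0 := by
  rw [mem_span_singleton] at ha hb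
  have hdvd : truncT k f ^ (i + j) ∣ a * b := pow_add (truncT k f) i j ▸ mul_dvd_mul ha hb
  rwa [truncT_pow_eq_zero hij, zero_dvd_iff] at hdvd

theorem truncT_pow_mul_mk (W : k⟦X⟧) :
    truncT k f ^ f * Ideal.Quotient.mk _ W = constantCoeff W • truncT k f ^ f := by
  conv_lhs => rw [eq_X_mul_shift_add_const W]
  rw [map_add, map_mul, mul_add, ← mul_assoc, ← pow_succ, truncT_pow_eq_zero le_rfl, zero_mul,
    zero_add, mul_comm]
  exact (Algebra.smul_def (R := k) (constantCoeff W) (truncT k f ^ f)).symm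

theorem exists_mul_truncT_pow_eq_smul {m : ℕ} (hm : m ≤ f + 1) {a : TruncatedPS k f}
    (ha : a ∉ span {truncT k f ^ m}) :
    ∃ j < m, ∃ c : k, c ≠ 0 ∧ a * truncT k f ^ (f - j) = c • truncT k f ^ f := by
  obtain ⟨W, rfl⟩ := Ideal.Quotient.mk_surjective a
  have hdvd {n : ℕ} (h : X ^ n ∣ W) : Ideal.Quotient.mk _ W ∈ span {truncT k f ^ n} := by
    simpa only [mem_span_singleton, map_pow] using map_dvd (Ideal.Quotient.mk _) h
  have hj : W.order.toNat < m := by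
    by_contra! h
    exact ha (hdvd ((pow_dvd_pow X h).trans X_pow_order_dvd))
  have hW : W ≠ 0 := by
    rintro rfl
    exact ha (hdvd (dvd_zero _))
  refine ⟨_, hj, _, constantCoeff_divXPowOrder_eq_zero_iff.not.mpr hW, ?_⟩
  have hsplit : Ideal.Quotient.mk _ W =
      truncT k f ^ W.order.toNat * Ideal.Quotient.mk _ W.divXPowOrder := by
    rw [← map_pow, ← map_mul, X_pow_order_mul_divXPowOrder]
  rw [hsplit, mul_comm, ← mul_assoc, ← pow_add, Nat.sub_add_cancel (by omega),
    truncT_pow_mul_mk]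

end TruncatedPS

theorem stabilizer_of_restricted_functional_general
    (k : Type*) [Field k] (f : ℕ)
    (lam : TruncatedPS k f →ₗ[k] k)
    (hlam : lam (truncT k f ^ f) ≠ 0) :
    ∀ u : (TruncatedPS k f)ˣ,
      (∀ v ∈ Ideal.span {truncT k f ^ ((f + 1) - (f + 1) / 2)},
          lam ((u : TruncatedPS k f) * v) = lam v) ↔
        ((u : TruncatedPS k f) - 1) ∈ Ideal.span {truncT k f ^ ((f + 1) / 2)} := by
  intro u
  have fixes_iff (v : TruncatedPS k f) : lam (u * v) = lam v ↔ lam ((u - 1) * v) = 0 := by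
    rw [sub_mul, one_mul, map_sub, sub_eq_zero]
  simp only [fixes_iff]
  constructor
  · intro hfix
    by_contra ha
    obtain ⟨j, hj, c, hc, hmul⟩ :=
      TruncatedPS.exists_mul_truncT_pow_eq_smul (by omega) ha
    have hv : truncT k f ^ (f - j) ∈ Ideal.span {truncT k f ^ ((f + 1) - (f + 1) / 2)} :=
      Ideal.mem_span_singleton.mpr (pow_dvd_pow _ (by omega))
    have hvanish := hfix _ hv
    rw [hmul, map_smul, smul_eq_mul] at hvanish
    exact mul_ne_zero hc hlam hvanish
  · intro ha v hv
    rw [TruncatedPS.mul_eq_zero_of_mem_span_truncT_pow (by omega) ha hv, map_zero]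

/-- Let `k` be a field, `𝔬 = k[[T]]`, `f ≥ 1`, and
`λ : 𝔬/T^{f+1} → k` a linear functional with `λ(T^f) ≠ 0` (conductor exactly `f`).
Set `f' = ⌊(f+1)/2⌋` and `f'' = ⌈(f+1)/2⌉`.  Then the stabilizer, under the
multiplication action of `U/U^{f+1}` on linear functionals on `T^{f''}𝔬/T^{f+1}𝔬`, of
the restriction of `λ`, equals `U^{f'}/U^{f+1}`: a unit `u` satisfies
`λ(u·v) = λ(v)` for all `v ∈ T^{f''}𝔬` if and only if `u − 1 ∈ T^{f'}𝔬`. -/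
theorem stabilizer_of_restricted_functional
    (k : Type*) [Field k] (f : ℕ) (hf : 1 ≤ f)
    (lam : TruncatedPS k f →ₗ[k] k)
    (hlam : lam (truncT k f ^ f) ≠ 0) :
    ∀ u : (TruncatedPS k f)ˣ,
      (∀ v ∈ Ideal.span {truncT k f ^ ((f + 1) - (f + 1) / 2)},
          lam ((u : TruncatedPS k f) * v) = lam v) ↔
        ((u : TruncatedPS k f) - 1) ∈ Ideal.span {truncT k f ^ ((f + 1) / 2)} :=
  stabilizer_of_restricted_functional_general k f lam hlam
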